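/- Combining the peak-function bounds with the disc estimates: let η ∈ (0,1], c₁,…,c₄ > 0, G increasing with G^η increasing and convex, δ, F(δ) > 0 with c₄F(δ) ≤ c₂c₃δ/(2c₂). Suppose A := ψ(z₀ − c₄F(δ)ν) satisfies A ≥ −c₁(c₄F(δ))^η, and suppose A ≤ −(1/2π)∫_0^{2π} G(c₂|h(e^{iθ}) − c₄F(δ)ν − z₀|)^η dθ where h : Δ̄ → ℂⁿ is continuous, holomorphic inside, h(0)=z₀, |h'(0)| ≥ c₃δ. Then G(c₂c₃δ − c₂c₄F(δ))^η ≤ c₁ c₄^η F(δ)^η; in particular, if additionally c₄F(δ) ≤ c₃δ/2, then G(c₂c₃δ/2)^η ≤ c₁c₄^η F(δ)^η, i.e., F(δ) ≥ β G(αδ) with α = c₂c₃/2 and β = (c₁^{1/η} c₄)^{-1}. -/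

import Mathlib

/-!
By Cauchy's formula for `h'(0)`, the mean of `‖h(e^{iθ}) - z₀‖` over the circle is at least
`‖h'(0)‖ ≥ c₃δ`. Moving every boundary point by `c₄F(δ)ν` lowers this mean by at most `c₄F(δ)`,
so Jensen's inequality for the increasing convex function `G^η` turns the upper bound on `A` into
`G(c₂c₃δ - c₂c₄F(δ))^η ≤ -A ≤ c₁(c₄F(δ))^η`. The other two bounds follow from monotonicity and
by taking `η`-th roots.
-/

open Set Metric Real Filter Topology

lemma ConvexOn.continuousWithinAt_Ici_of_monotoneOn {φ : ℝ → ℝ} {a : ℝ}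
    (hφ : ConvexOn ℝ (Ici a) φ) (hmono : MonotoneOn φ (Ici a)) :
    ContinuousWithinAt φ (Ici a) a := by
  have hchord : Tendsto (fun x => (a + 1 - x) * φ a + (x - a) * φ (a + 1)) (𝓝[Ici a] a)
      (𝓝 (φ a)) := by
    refine tendsto_nhdsWithin_of_tendsto_nhds (Continuous.tendsto' ?_ _ _ (by ring))
    fun_prop
  refine tendsto_of_tendsto_of_tendsto_of_le_of_le' tendsto_const_nhds hchord ?_ ?_
  · filter_upwards [self_mem_nhdsWithin] with x hx using hmono self_mem_Ici hx hx
  · filter_upwards [self_mem_nhdsWithin, nhdsWithin_le_nhds (eventually_lt_nhds (lt_add_one a))]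
      with x hx hx1
    rcases eq_or_lt_of_le (α := ℝ) hx with rfl | hax
    · simp
    · simpa using hφ.secant_mono_aux1 self_mem_Ici (by simp) hax hx1

lemma ConvexOn.exists_affine_le_of_mem_interior {φ : ℝ → ℝ} {S : Set ℝ}
    (hφ : ConvexOn ℝ S φ) {x : ℝ} (hx : x ∈ interior S) :
    ∃ k, ∀ y ∈ S, φ x + k * (y - x) ≤ φ y := by
  refine ⟨derivWithin φ (Ioi x) x, fun y hy => ?_⟩
  rcases lt_trichotomy y x with hyx | rfl | hxy
  · have h := (hφ.slope_le_leftDeriv_of_mem_interior hy hx hyx).trans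
      (hφ.leftDeriv_le_rightDeriv_of_mem_interior hx)
    rw [slope_def_field, div_le_iff₀ (sub_pos.2 hyx)] at h
    linarith
  · simp
  · have h := hφ.rightDeriv_le_slope_of_mem_interior hx hy hxy
    rw [slope_def_field, le_div_iff₀ (sub_pos.2 hxy)] at h
    linarith

lemma le_of_rpow_le_rpow_of_nonneg {a b η : ℝ} (hb : 0 ≤ b) (hη : 0 < η)
    (h : a ^ η ≤ b ^ η) : a ≤ b := by
  rcases lt_or_ge a 0 with ha | ha
  · linarith
  · exact (rpow_le_rpow_iff ha hb hη).1 h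

lemma circleAverage_mul_sub_const {f : ℂ → ℝ} {c : ℂ} {R : ℝ} (hf : CircleIntegrable f c R)
    (k a : ℝ) : circleAverage (fun z => k * (f z - a)) c R = k * (circleAverage f c R - a) := by
  have h := (circleAverage_fun_smul (a := k) (f := fun z => f z - a) (c := c) (R := R)).trans
    (congrArg (k • ·) (circleAverage_fun_sub hf (circleIntegrable_const a c R)))
  rwa [circleAverage_const] at h

lemma ConvexOn.map_circleAverage_le {φ : ℝ → ℝ} {S : Set ℝ} (hφ : ConvexOn ℝ S φ)
    {f : ℂ → ℝ} {c : ℂ} {R : ℝ} (hf : CircleIntegrable f c R)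
    (hφf : CircleIntegrable (φ ∘ f) c R) (hfS : MapsTo f (sphere c |R|) S)
    (hmean : circleAverage f c R ∈ interior S) :
    φ (circleAverage f c R) ≤ circleAverage (φ ∘ f) c R := by
  obtain ⟨k, hk⟩ := hφ.exists_affine_le_of_mem_interior hmean
  set a := circleAverage f c R
  have hline : CircleIntegrable (fun z => k * (f z - a)) c R :=
    (hf.sub (circleIntegrable_const a c R)).const_mul k
  calc φ a = circleAverage (fun z => φ a + k * (f z - a)) c R := by
        rw [circleAverage_fun_add (circleIntegrable_const _ c R) hline, circleAverage_const,
          circleAverage_mul_sub_const hf, sub_self, mul_zero, add_zero]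
    _ ≤ circleAverage (φ ∘ f) c R :=
        circleAverage_mono ((circleIntegrable_const _ c R).add hline) hφf
          fun z hz => hk (f z) (hfS hz)

lemma norm_circleAverage_le {E : Type*} [NormedAddCommGroup E] [NormedSpace ℝ E]
    (f : ℂ → E) (c : ℂ) (R : ℝ) :
    ‖circleAverage f c R‖ ≤ circleAverage (fun z => ‖f z‖) c R := by
  rw [circleAverage_def, circleAverage_def, norm_smul, smul_eq_mul, norm_inv,
    Real.norm_of_nonneg two_pi_pos.le]
  gcongr
  exact intervalIntegral.norm_integral_le_integral_norm two_pi_pos.le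

section

variable {E : Type*} [NormedAddCommGroup E] [NormedSpace ℂ E] [CompleteSpace E]

lemma DiffContOnCl.deriv_eq_circleAverage {f : ℂ → E} {c : ℂ} {R : ℝ} (hR : 0 < R)
    (hf : DiffContOnCl ℂ f (ball c R)) :
    deriv f c = Real.circleAverage (fun z => (z - c)⁻¹ • f z) c R := by
  rw [circleAverage_eq_circleIntegral hR.ne', eq_inv_smul_iff₀ Complex.two_pi_I_ne_zero,
    ← hf.deriv_eq_smul_circleIntegral hR]
  congr 1 with z
  rw [smul_smul, one_div, ← mul_inv, sq]

lemma DiffContOnCl.norm_deriv_le_circleAverage {f : ℂ → E} {c : ℂ} {R : ℝ} (hR : 0 < R)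
    (hf : DiffContOnCl ℂ f (ball c R)) :
    ‖deriv f c‖ ≤ R⁻¹ * Real.circleAverage (fun z => ‖f z‖) c R := by
  have hsphere : EqOn (fun z => ‖(z - c)⁻¹ • f z‖) (fun z => R⁻¹ * ‖f z‖) (sphere c |R|) := by
    intro z hz
    rw [mem_sphere_iff_norm, abs_of_pos hR] at hz
    simp only [norm_smul, norm_inv, hz]
  calc ‖deriv f c‖ ≤ Real.circleAverage (fun z => ‖(z - c)⁻¹ • f z‖) c R := by
        rw [hf.deriv_eq_circleAverage hR]; exact norm_circleAverage_le _ c R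
    _ = R⁻¹ * Real.circleAverage (fun z => ‖f z‖) c R := by
        rw [circleAverage_congr_sphere hsphere, ← smul_eq_mul, ← circleAverage_fun_smul]; rfl

lemma ConvexOn.map_mul_norm_deriv_sub_le_circleAverage {φ : ℝ → ℝ}
    (hφ : ConvexOn ℝ (Ici 0) φ) (hφm : MonotoneOn φ (Ici 0)) {h : ℂ → E}
    (hh : DiffContOnCl ℂ h (ball 0 1)) (w : E) {c : ℝ} (hc : 0 ≤ c)
    (hpos : 0 < c * (‖deriv h 0‖ - ‖w‖)) :
    φ (c * (‖deriv h 0‖ - ‖w‖)) ≤ circleAverage (fun z => φ (c * ‖h z - w‖)) 0 1 := by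
  set f : ℂ → ℝ := fun z => c * ‖h z - w‖
  have hhc : ContinuousOn h (sphere 0 |1|) := hh.continuousOn.mono <| by
    rw [closure_ball 0 one_ne_zero, abs_one]; exact sphere_subset_closedBall
  have hfc : ContinuousOn f (sphere 0 |1|) :=
    continuousOn_const.mul (hhc.sub continuousOn_const).norm
  have hfS : MapsTo f (sphere 0 |1|) (Ici 0) := fun z _ => mem_Ici.2 (by positivity)
  have hφc : ContinuousOn φ (Ici 0) :=
    hφ.continuousOn_Ici (hφ.continuousWithinAt_Ici_of_monotoneOn hφm)
  have hnorm : CircleIntegrable (fun z => ‖h z‖) 0 1 := hhc.norm.circleIntegrable'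
  have hmean : c * (‖deriv h 0‖ - ‖w‖) ≤ circleAverage f 0 1 := by
    calc c * (‖deriv h 0‖ - ‖w‖) ≤ c * (circleAverage (fun z => ‖h z‖) 0 1 - ‖w‖) := by
          gcongr; simpa using hh.norm_deriv_le_circleAverage one_pos
      _ = circleAverage (fun z => c * (‖h z‖ - ‖w‖)) 0 1 :=
          (circleAverage_mul_sub_const hnorm c ‖w‖).symm
      _ ≤ circleAverage f 0 1 :=
          circleAverage_mono ((hnorm.sub (circleIntegrable_const _ 0 1)).const_mul c)
            hfc.circleIntegrable' fun z _ => mul_le_mul_of_nonneg_left (norm_sub_norm_le _ _) hc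
  calc φ (c * (‖deriv h 0‖ - ‖w‖)) ≤ φ (circleAverage f 0 1) :=
        hφm (mem_Ici.2 hpos.le) (mem_Ici.2 (hpos.le.trans hmean)) hmean
    _ ≤ circleAverage (φ ∘ f) 0 1 :=
        hφ.map_circleAverage_le hfc.circleIntegrable' (hφc.comp hfc hfS).circleIntegrable' hfS
          (by rw [interior_Ici]; exact hpos.trans_le hmean)

end

theorem stmt18_general (n : ℕ) (η c₁ c₂ c₃ c₄ : ℝ)
    (hη0 : 0 < η)
    (hc₁ : 0 < c₁) (hc₂ : 0 < c₂) (hc₃ : 0 < c₃) (hc₄ : 0 < c₄)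
    (G : ℝ → ℝ)
    (hGηmono : MonotoneOn (fun x => G x ^ η) (Ici 0))
    (hGηconv : ConvexOn ℝ (Ici 0) (fun x => G x ^ η))
    (δ Fδ : ℝ) (hδ : 0 < δ) (hFδ : 0 < Fδ)
    (hsmall : c₄ * Fδ ≤ c₃ * δ / 2)
    (h : ℂ → EuclideanSpace ℂ (Fin n)) (z₀ ν : EuclideanSpace ℂ (Fin n))
    (hν : ‖ν‖ = 1)
    (hcont : ContinuousOn h (closedBall (0:ℂ) 1))
    (hhol : DifferentiableOn ℂ h (ball (0:ℂ) 1))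
    (hderiv : c₃ * δ ≤ ‖deriv h 0‖)
    (A : ℝ) (hA1 : -c₁ * (c₄ * Fδ) ^ η ≤ A)
    (hA2 : A ≤ -((2 * π)⁻¹ * ∫ θ in (0:ℝ)..(2 * π),
      G (c₂ * ‖h (Complex.exp (θ * Complex.I)) - (c₄ * Fδ) • ν - z₀‖) ^ η)) :
    G (c₂ * c₃ * δ - c₂ * c₄ * Fδ) ^ η ≤ c₁ * c₄ ^ η * Fδ ^ η ∧
    G (c₂ * c₃ * δ / 2) ^ η ≤ c₁ * c₄ ^ η * Fδ ^ η ∧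
    (c₁ ^ (1 / η) * c₄)⁻¹ * G (c₂ * c₃ / 2 * δ) ≤ Fδ := by
  set w := (c₄ * Fδ) • ν
  have hw : ‖w‖ = c₄ * Fδ := by rw [norm_smul, hν, mul_one, norm_of_nonneg (by positivity)]
  have hh : DiffContOnCl ℂ h (ball 0 1) := ⟨hhol, by rwa [closure_ball 0 one_ne_zero]⟩
  set m := c₂ * c₃ * δ - c₂ * c₄ * Fδ
  have hhalf_pos : 0 < c₂ * c₃ * δ / 2 := by positivity
  have hhalf_le : c₂ * c₃ * δ / 2 ≤ m := by nlinarith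
  have hm_le : m ≤ c₂ * (‖deriv (fun z => h z - z₀) 0‖ - ‖w‖) := by
    rw [deriv_sub_const, hw]; nlinarith
  have hjensen := hGηconv.map_mul_norm_deriv_sub_le_circleAverage hGηmono (hh.sub_const z₀) w
    hc₂.le (by linarith)
  have hmain : G m ^ η ≤ c₁ * c₄ ^ η * Fδ ^ η :=
    calc G m ^ η ≤ G (c₂ * (‖deriv (fun z => h z - z₀) 0‖ - ‖w‖)) ^ η :=
          hGηmono (by simp only [mem_Ici]; linarith) (by simp only [mem_Ici]; linarith) hm_le
      _ ≤ (2 * π)⁻¹ * ∫ θ in (0:ℝ)..(2 * π),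
            G (c₂ * ‖h (Complex.exp (θ * Complex.I)) - w - z₀‖) ^ η := by
          simpa [circleAverage_def, circleMap, sub_right_comm] using hjensen
      _ ≤ c₁ * (c₄ * Fδ) ^ η := by linarith
      _ = c₁ * c₄ ^ η * Fδ ^ η := by rw [mul_rpow hc₄.le hFδ.le, mul_assoc]
  have hhalf : G (c₂ * c₃ * δ / 2) ^ η ≤ c₁ * c₄ ^ η * Fδ ^ η :=
    (hGηmono hhalf_pos.le (hhalf_pos.le.trans hhalf_le) hhalf_le).trans hmain
  refine ⟨hmain, hhalf, ?_⟩
  rw [inv_mul_le_iff₀ (by positivity), div_mul_eq_mul_div]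
  refine le_of_rpow_le_rpow_of_nonneg (by positivity) hη0 (hhalf.trans_eq ?_)
  rw [mul_rpow (by positivity) hFδ.le, mul_rpow (by positivity) hc₄.le, ← rpow_mul hc₁.le,
    one_div, inv_mul_cancel₀ hη0.ne', rpow_one]

theorem stmt18 (n : ℕ) (η c₁ c₂ c₃ c₄ : ℝ)
    (hη0 : 0 < η) (hη1 : η ≤ 1)
    (hc₁ : 0 < c₁) (hc₂ : 0 < c₂) (hc₃ : 0 < c₃) (hc₄ : 0 < c₄)
    (G : ℝ → ℝ) (hGnn : ∀ x ≥ (0:ℝ), 0 ≤ G x) (hGmono : MonotoneOn G (Ici 0))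
    (hGηmono : MonotoneOn (fun x => G x ^ η) (Ici 0))
    (hGηconv : ConvexOn ℝ (Ici 0) (fun x => G x ^ η))
    (δ Fδ : ℝ) (hδ : 0 < δ) (hFδ : 0 < Fδ)
    (hsmall : c₄ * Fδ ≤ c₃ * δ / 2)
    (h : ℂ → EuclideanSpace ℂ (Fin n)) (z₀ ν : EuclideanSpace ℂ (Fin n))
    (hν : ‖ν‖ = 1)
    (hcont : ContinuousOn h (closedBall (0:ℂ) 1))
    (hhol : DifferentiableOn ℂ h (ball (0:ℂ) 1))
    (h0 : h 0 = z₀)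
    (hsup : ∀ t ∈ closedBall (0:ℂ) 1, ‖h t - z₀‖ ≤ δ)
    (hderiv : c₃ * δ ≤ ‖deriv h 0‖)
    (A : ℝ) (hA1 : -c₁ * (c₄ * Fδ) ^ η ≤ A)
    (hA2 : A ≤ -((2 * π)⁻¹ * ∫ θ in (0:ℝ)..(2 * π),
      G (c₂ * ‖h (Complex.exp (θ * Complex.I)) - (c₄ * Fδ) • ν - z₀‖) ^ η)) :
    G (c₂ * c₃ * δ - c₂ * c₄ * Fδ) ^ η ≤ c₁ * c₄ ^ η * Fδ ^ η ∧
    G (c₂ * c₃ * δ / 2) ^ η ≤ c₁ * c₄ ^ η * Fδ ^ η ∧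
    (c₁ ^ (1 / η) * c₄)⁻¹ * G (c₂ * c₃ / 2 * δ) ≤ Fδ :=
  stmt18_general n η c₁ c₂ c₃ c₄ hη0 hc₁ hc₂ hc₃ hc₄ G hGηmono hGηconv δ Fδ hδ hFδ hsmall h z₀ ν hν
    hcont hhol hderiv A hA1 hA2
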